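/- arXiv:2411.00775 — 2 statements merged into one kernel-verified Lean document; each statement's English description precedes it below -/
import Mathlib

section
/- For a positive semidefinite symmetric matrix Σ in R^{d×d}, the trace of its square root is at most the sum of the square roots of its diagonal entries: tr(Σ^{1/2}) ≤ Σ_{i=1}^d Σ_{ii}^{1/2}. -/
/-!
The square root `R` of `S` is symmetric with `R * R = S`, so
`S i i = ∑ k, R i k ^ 2 ≥ R i i ^ 2`; hence `R i i ≤ |R i i| ≤ √(S i i)` for each `i`,
and summing over `i` bounds the trace.
-/

open Matrix

namespace Matrix.IsHermitian

variable {n : Type*} [Fintype n] {A : Matrix n n ℝ}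

theorem sq_apply_self_le_mul_self_apply (hA : A.IsHermitian) (i : n) :
    A i i ^ 2 ≤ (A * A) i i := by
  have hsum : (A * A) i i = ∑ k, A i k ^ 2 := by
    simp only [mul_apply, sq]
    refine Finset.sum_congr rfl fun k _ => ?_
    rw [← hA.apply i k, star_trivial]
  rw [hsum]
  exact Finset.single_le_sum (f := fun k => A i k ^ 2) (fun k _ => sq_nonneg _)
    (Finset.mem_univ i)

theorem trace_le_sum_sqrt_mul_self_apply (hA : A.IsHermitian) :
    A.trace ≤ ∑ i, √((A * A) i i) :=
  Finset.sum_le_sum fun i _ =>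
    (le_abs_self _).trans (Real.abs_le_sqrt (hA.sq_apply_self_le_mul_self_apply i))

end Matrix.IsHermitian

theorem Matrix.PosSemidef.cfc_sqrt_mul_self {n : Type*} [Fintype n] [DecidableEq n]
    {S : Matrix n n ℝ} (hS : S.PosSemidef) : cfc Real.sqrt S * cfc Real.sqrt S = S := by
  -- found by the `cfc` autoparams of `cfc_mul` and `cfc_id'`
  have hSa : IsSelfAdjoint S := hS.1
  rw [← cfc_mul ..]
  conv_rhs => rw [← cfc_id' ℝ S]
  refine cfc_congr fun x hx => Real.mul_self_sqrt ?_
  obtain ⟨i, rfl⟩ := hS.1.spectrum_real_eq_range_eigenvalues ▸ hx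
  exact hS.eigenvalues_nonneg i

/-- For a positive semidefinite symmetric real matrix `S`, the trace of its (unique
positive semidefinite) square root is at most the sum of the square roots of its
diagonal entries: `tr(S^{1/2}) ≤ ∑ i, S i i ^ (1/2)`. -/
theorem trace_sqrt_le_sum_sqrt_diag {d : ℕ} (S : Matrix (Fin d) (Fin d) ℝ)
    (hS : S.PosSemidef) :
    (hS.1.eigenvectorUnitary.1 * diagonal ((RCLike.ofReal : ℝ → ℝ) ∘ (fun x : ℝ => √x) ∘ hS.1.eigenvalues) *
      (star hS.1.eigenvectorUnitary : Matrix (Fin d) (Fin d) ℝ)).trace ≤ ∑ i, Real.sqrt (S i i) := by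
  calc (hS.1.cfc Real.sqrt).trace = (cfc Real.sqrt S).trace := by rw [hS.1.cfc_eq]
    _ ≤ ∑ i, √((cfc Real.sqrt S * cfc Real.sqrt S) i i) :=
      (cfc_predicate Real.sqrt S).isHermitian.trace_le_sum_sqrt_mul_self_apply
    _ = ∑ i, √(S i i) := by rw [hS.cfc_sqrt_mul_self]
end

section
/- Conditioning preserves indistinguishability up to rescaling: if random variables Y and Y′ over a space 𝒴 satisfy P[Y ∈ W] ≤ e^ε P[Y′ ∈ W] and P[Y′ ∈ W] ≤ e^ε P[Y ∈ W] for all measurable W, and E ⊆ 𝒴 is an event with P[Y ∈ E] ≥ q and P[Y′ ∈ E] ≥ q, then the conditional distributions Y|E and Y′|E are (ε/q)-indistinguishable, i.e., for all measurable W, P[Y ∈ W | Y ∈ E] ≤ e^{ε/q} P[Y′ ∈ W | Y′ ∈ E] and symmetrically. -/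
open MeasureTheory ProbabilityTheory
open scoped ENNReal

/-!
Conditioning on `E` divides by the normalisers `P E` and `Q E`, so besides the bound
`P (E ∩ W) ≤ e^ε Q (E ∩ W)` one needs `e^ε Q E ≤ e^{ε/q} P E`. This comes from the
complement: `1 - P E ≤ e^ε (1 - Q E)` gives `e^ε Q E ≤ P E + (e^ε - 1)`, and since `P E ≥ q`,
Bernoulli's inequality `1 + (e^ε - 1)/q ≤ (e^ε)^{1/q}` bounds the right side by `e^{ε/q} P E`.
-/

theorem Real.exp_mul_le_exp_div_mul_of_one_sub_le {ε q p p' : ℝ} (hε : 0 ≤ ε) (hq : 0 < q)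
    (hqp : q ≤ p) (hp : p ≤ 1) (hcompl : 1 - p ≤ Real.exp ε * (1 - p')) :
    Real.exp ε * p' ≤ Real.exp (ε / q) * p := by
  have bernoulli : 1 + (Real.exp ε - 1) / q ≤ Real.exp (ε / q) := by
    have := one_add_mul_self_le_rpow_one_add (s := Real.exp ε - 1)
      (by linarith [Real.exp_pos ε]) (one_le_inv₀ hq |>.2 (hqp.trans hp))
    rwa [add_sub_cancel, ← Real.exp_mul, ← div_eq_mul_inv, inv_mul_eq_div] at this
  have hexp : 0 ≤ Real.exp ε - 1 := by linarith [Real.one_le_exp hε]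
  calc Real.exp ε * p' ≤ p + (Real.exp ε - 1) := by linarith
    _ ≤ p + (Real.exp ε - 1) * (p / q) := by
        gcongr; exact le_mul_of_one_le_right hexp ((one_le_div hq).2 hqp)
    _ = (1 + (Real.exp ε - 1) / q) * p := by ring
    _ ≤ Real.exp (ε / q) * p := by gcongr; linarith

theorem MeasureTheory.cond_apply_le_mul_cond_apply {α : Type*} [MeasurableSpace α]
    {μ ν : Measure α} {E : Set α} (hE : MeasurableSet E) {a b : ℝ≥0∞} {W : Set α}
    (hμE : μ E ≠ 0) (hμE' : μ E ≠ ∞) (hνE : ν E ≠ 0) (hνE' : ν E ≠ ∞)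
    (hW : μ (E ∩ W) ≤ a * ν (E ∩ W)) (hab : a * ν E ≤ b * μ E) :
    μ[|E] W ≤ b * ν[|E] W := by
  have hinv : (μ E)⁻¹ * a ≤ b * (ν E)⁻¹ := by
    calc (μ E)⁻¹ * a = (μ E)⁻¹ * (a * ν E) * (ν E)⁻¹ := by
          rw [mul_assoc, mul_assoc, ENNReal.mul_inv_cancel hνE hνE', mul_one]
      _ ≤ (μ E)⁻¹ * (b * μ E) * (ν E)⁻¹ := by gcongr
      _ = b * (ν E)⁻¹ := by
          rw [mul_comm b, ← mul_assoc, ENNReal.inv_mul_cancel hμE hμE', one_mul]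
  rw [cond_apply hE, cond_apply hE]
  calc (μ E)⁻¹ * μ (E ∩ W) ≤ (μ E)⁻¹ * a * ν (E ∩ W) := by
        rw [mul_assoc]; gcongr
    _ ≤ b * (ν E)⁻¹ * ν (E ∩ W) := by gcongr
    _ = b * ((ν E)⁻¹ * ν (E ∩ W)) := mul_assoc _ _ _

theorem MeasureTheory.exp_mul_measure_le_exp_div_mul_measure {α : Type*} [MeasurableSpace α]
    {P Q : Measure α} [IsProbabilityMeasure P] [IsProbabilityMeasure Q] {ε q : ℝ}
    (hε : 0 ≤ ε) (hq : 0 < q) {E : Set α} (hE : MeasurableSet E)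
    (hPE : ENNReal.ofReal q ≤ P E) (hcompl : P Eᶜ ≤ ENNReal.ofReal (Real.exp ε) * Q Eᶜ) :
    ENNReal.ofReal (Real.exp ε) * Q E ≤ ENNReal.ofReal (Real.exp (ε / q)) * P E := by
  rw [← ofReal_measureReal, ← ofReal_measureReal, ← ENNReal.ofReal_mul (Real.exp_nonneg _),
    ENNReal.ofReal_le_ofReal_iff (by positivity), probReal_compl_eq_one_sub hE,
    probReal_compl_eq_one_sub hE] at hcompl
  rw [← ofReal_measureReal, ENNReal.ofReal_le_ofReal_iff'] at hPE
  rw [← ofReal_measureReal, ← ofReal_measureReal, ← ENNReal.ofReal_mul (Real.exp_nonneg _),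
    ← ENNReal.ofReal_mul (Real.exp_nonneg _)]
  exact ENNReal.ofReal_le_ofReal <| Real.exp_mul_le_exp_div_mul_of_one_sub_le hε hq
    (hPE.resolve_right (by linarith)) measureReal_le_one hcompl

theorem MeasureTheory.cond_apply_le_exp_div_mul_cond_apply {α : Type*} [MeasurableSpace α]
    {P Q : Measure α} [IsProbabilityMeasure P] [IsProbabilityMeasure Q] {ε q : ℝ}
    (hε : 0 ≤ ε) (hq : 0 < q)
    (hind : ∀ W : Set α, MeasurableSet W → P W ≤ ENNReal.ofReal (Real.exp ε) * Q W)
    {E : Set α} (hE : MeasurableSet E)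
    (hPE : ENNReal.ofReal q ≤ P E) (hQE : ENNReal.ofReal q ≤ Q E)
    {W : Set α} (hW : MeasurableSet W) :
    P[|E] W ≤ ENNReal.ofReal (Real.exp (ε / q)) * Q[|E] W :=
  cond_apply_le_mul_cond_apply hE ((ENNReal.ofReal_pos.2 hq).trans_le hPE).ne'
    (measure_ne_top _ _) ((ENNReal.ofReal_pos.2 hq).trans_le hQE).ne' (measure_ne_top _ _)
    (hind _ (hE.inter hW))
    (exp_mul_measure_le_exp_div_mul_measure hε hq hE hPE (hind _ hE.compl))

/-- Conditioning preserves indistinguishability up to rescaling: if the laws `P`, `Q` of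
`Y`, `Y'` are `(ε, 0)`-indistinguishable and `E` is an event with `P E ≥ q` and
`Q E ≥ q`, then the conditional laws `P[·|E]` and `Q[·|E]` are `(ε/q, 0)`-indistinguishable. -/
theorem cond_indistinguishable {𝒴 : Type*} [MeasurableSpace 𝒴]
    (P Q : Measure 𝒴) [IsProbabilityMeasure P] [IsProbabilityMeasure Q]
    (ε q : ℝ) (hε : 0 ≤ ε) (hq : 0 < q)
    (hind : ∀ W : Set 𝒴, MeasurableSet W →
      P W ≤ ENNReal.ofReal (Real.exp ε) * Q W ∧
        Q W ≤ ENNReal.ofReal (Real.exp ε) * P W)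
    (E : Set 𝒴) (hE : MeasurableSet E)
    (hPE : ENNReal.ofReal q ≤ P E) (hQE : ENNReal.ofReal q ≤ Q E) :
    ∀ W : Set 𝒴, MeasurableSet W →
      (P[|E]) W ≤ ENNReal.ofReal (Real.exp (ε / q)) * (Q[|E]) W ∧
        (Q[|E]) W ≤ ENNReal.ofReal (Real.exp (ε / q)) * (P[|E]) W := fun _ hW =>
  ⟨cond_apply_le_exp_div_mul_cond_apply hε hq (fun W hW => (hind W hW).1) hE hPE hQE hW,
    cond_apply_le_exp_div_mul_cond_apply hε hq (fun W hW => (hind W hW).2) hE hQE hPE hW⟩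
end
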